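/- Let ω(p) = ∑_{k=1}^d u_k p^{−k} and x(p) = α + γ(p+1/p) with V'(x(p)) = u_0 + ∑_{k=1}^d u_k(p^k + p^{−k}) and u_0 = 0. Then (V'(x(p)) − ω(p))·ω(p) is invariant under p ↦ 1/p, hence equals P(x(p)) for some polynomial P of degree d − 1. -/

import Mathlib

/-!
With `A(p) = ∑ u_k p^k`, the hypothesis on `V'` reads `V'(x(p)) = A(p) + ω(p)`, and `ω(1/p) = A(p)`,
so the expression is `A(p) ω(p)`, which is visibly symmetric. Symmetrizing the double sum,
`2 A(p) ω(p) = ∑_{k,j} u_k u_j (p^|k-j| + p^-|k-j|)`, and `p^n + p^-n = D_n(p + 1/p)` for the Dickson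
polynomial `D_n = dickson 1 1 n` of degree `≤ n`. Since `|k - j| ≤ d - 1` and `p + 1/p` is an affine
function of `x(p)`, this yields `P`.
-/

open Polynomial Finset

namespace Polynomial

theorem natDegree_dickson_le {R : Type*} [CommRing R] (k : ℕ) (a : R) :
    ∀ n, (dickson k a n).natDegree ≤ n
  | 0 => by
    rw [dickson_zero, show (3 - k : R[X]) = C (3 - (k : R)) by simp [map_ofNat]]
    exact (natDegree_C _).le
  | 1 => natDegree_X_le
  | n + 2 => by
    rw [dickson_add_two]
    refine (natDegree_sub_le _ _).trans (max_le ?_ ?_)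
    · exact natDegree_mul_le.trans
        ((add_le_add natDegree_X_le (natDegree_dickson_le k a (n + 1))).trans (by omega))
    · exact (natDegree_C_mul_le _ _).trans ((natDegree_dickson_le k a n).trans (by omega))

end Polynomial

section LaurentSymmetrization

variable {K : Type*} [Field K]

theorem pow_mul_inv_pow_add_pow_mul_inv_pow {p : K} (hp : p ≠ 0) (k j : ℕ) :
    p ^ k * p⁻¹ ^ j + p ^ j * p⁻¹ ^ k = p ^ Nat.dist k j + p⁻¹ ^ Nat.dist k j := by
  wlog hjk : j ≤ k generalizing k j
  · rw [add_comm, Nat.dist_comm]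
    exact this j k (by omega)
  obtain ⟨m, rfl⟩ := Nat.exists_eq_add_of_le hjk
  have hunit : p ^ j * p⁻¹ ^ j = 1 := by rw [← mul_pow, mul_inv_cancel₀ hp, one_pow]
  rw [show Nat.dist (j + m) j = m by simp [Nat.dist]]
  linear_combination (p ^ m + p⁻¹ ^ m) * hunit

theorem two_mul_sum_mul_sum_inv {p : K} (hp : p ≠ 0) (s : Finset ℕ) (u : ℕ → K) :
    2 * ((∑ k ∈ s, u k * p ^ k) * ∑ j ∈ s, u j * p⁻¹ ^ j)
      = ∑ k ∈ s, ∑ j ∈ s, u k * u j * (p ^ Nat.dist k j + p⁻¹ ^ Nat.dist k j) := by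
  simp_rw [← pow_mul_inv_pow_add_pow_mul_inv_pow hp, mul_add, sum_add_distrib, sum_mul_sum]
  rw [two_mul]
  congr 1
  · exact sum_congr rfl fun k _ => sum_congr rfl fun j _ => by ring
  · rw [sum_comm]
    exact sum_congr rfl fun k _ => sum_congr rfl fun j _ => by ring

theorem exists_natDegree_le_eval_add_inv_eq [NeZero (2 : K)] (u : ℕ → K) (d : ℕ) :
    ∃ Q : K[X], Q.natDegree ≤ d - 1 ∧ ∀ p : K, p ≠ 0 →
      Q.eval (p + p⁻¹) = (∑ k ∈ Icc 1 d, u k * p ^ k) * ∑ k ∈ Icc 1 d, u k * p⁻¹ ^ k := by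
  refine ⟨C 2⁻¹ * ∑ k ∈ Icc 1 d, ∑ j ∈ Icc 1 d, C (u k * u j) * dickson 1 1 (Nat.dist k j),
    ?_, fun p hp => ?_⟩
  · refine (natDegree_C_mul_le _ _).trans (natDegree_sum_le_of_forall_le _ _ fun k hk => ?_)
    refine natDegree_sum_le_of_forall_le _ _ fun j hj => ?_
    refine (natDegree_C_mul_le _ _).trans ((natDegree_dickson_le _ _ _).trans ?_)
    simp only [mem_Icc] at hk hj
    simp only [Nat.dist]
    omega
  · simp only [eval_mul, eval_C, eval_finsetSum,
      dickson_one_one_eval_add_inv p p⁻¹ (mul_inv_cancel₀ hp)]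
    rw [← two_mul_sum_mul_sum_inv hp, inv_mul_cancel_left₀ two_ne_zero]

theorem exists_eval_add_mul_eq_eval {α γ : K} (hγ : γ ≠ 0) (Q : K[X]) :
    ∃ P : K[X], P.natDegree ≤ Q.natDegree ∧ ∀ y, P.eval (α + γ * y) = Q.eval y := by
  refine ⟨Q.comp (C γ⁻¹ * X + C (-(γ⁻¹ * α))), ?_, fun y => ?_⟩
  · exact natDegree_comp_le.trans ((Nat.mul_le_mul_left _ natDegree_linear_le).trans (by simp))
  · simp only [eval_comp, eval_add, eval_mul, eval_C, eval_X]
    congr 1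
    field_simp
    ring

end LaurentSymmetrization

theorem stmt15_general (α γ : ℂ) (hγ : γ ≠ 0) (V' : Polynomial ℂ) (d : ℕ)
    (u : ℕ → ℂ) (h0 : u 0 = 0)
    (hu : ∀ p : ℂ, p ≠ 0 →
      V'.eval (α + γ * (p + p⁻¹)) = u 0 + ∑ k ∈ Finset.Icc 1 d, u k * (p ^ k + p⁻¹ ^ k))
    (ω : ℂ → ℂ) (hω : ∀ p, ω p = ∑ k ∈ Finset.Icc 1 d, u k * p⁻¹ ^ k) :
    (∀ p : ℂ, p ≠ 0 →
      (V'.eval (α + γ * (p⁻¹ + p⁻¹⁻¹)) - ω p⁻¹) * ω p⁻¹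
        = (V'.eval (α + γ * (p + p⁻¹)) - ω p) * ω p) ∧
    ∃ P : Polynomial ℂ, P.natDegree ≤ d - 1 ∧
      ∀ p : ℂ, p ≠ 0 →
        (V'.eval (α + γ * (p + p⁻¹)) - ω p) * ω p = P.eval (α + γ * (p + p⁻¹)) := by
  set A : ℂ → ℂ := fun p => ∑ k ∈ Icc 1 d, u k * p ^ k
  have hV : ∀ p : ℂ, p ≠ 0 → V'.eval (α + γ * (p + p⁻¹)) = A p + ω p := by
    intro p hp
    rw [hu p hp, h0, zero_add, hω, ← sum_add_distrib]
    exact sum_congr rfl fun k _ => by ring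
  have hAω : ∀ p : ℂ, p ≠ 0 → (V'.eval (α + γ * (p + p⁻¹)) - ω p) * ω p = A p * ω p := by
    intro p hp
    rw [hV p hp, add_sub_cancel_right]
  refine ⟨fun p hp => ?_, ?_⟩
  · have hωinv : ω p⁻¹ = A p := by simp [hω, A]
    rw [inv_inv, add_comm p⁻¹ p, hAω p hp, hV p hp, hωinv]
    ring
  · obtain ⟨Q, hQdeg, hQ⟩ := exists_natDegree_le_eval_add_inv_eq u d
    obtain ⟨P, hPdeg, hP⟩ := exists_eval_add_mul_eq_eval (α := α) hγ Q
    refine ⟨P, hPdeg.trans hQdeg, fun p hp => ?_⟩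
    rw [hAω p hp, hP, hQ p hp, hω]

/-- (V'(x(p)) − ω(p))·ω(p) is symmetric under p ↦ 1/p and equals
P(x(p)) for a polynomial P of degree ≤ d − 1. -/
theorem stmt15 (α γ : ℂ) (hγ : γ ≠ 0) (V' : Polynomial ℂ) (d : ℕ) (hd : V'.natDegree = d)
    (u : ℕ → ℂ) (h0 : u 0 = 0)
    (hu : ∀ p : ℂ, p ≠ 0 →
      V'.eval (α + γ * (p + p⁻¹)) = u 0 + ∑ k ∈ Finset.Icc 1 d, u k * (p ^ k + p⁻¹ ^ k))
    (ω : ℂ → ℂ) (hω : ∀ p, ω p = ∑ k ∈ Finset.Icc 1 d, u k * p⁻¹ ^ k) :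
    (∀ p : ℂ, p ≠ 0 →
      (V'.eval (α + γ * (p⁻¹ + p⁻¹⁻¹)) - ω p⁻¹) * ω p⁻¹
        = (V'.eval (α + γ * (p + p⁻¹)) - ω p) * ω p) ∧
    ∃ P : Polynomial ℂ, P.natDegree ≤ d - 1 ∧
      ∀ p : ℂ, p ≠ 0 →
        (V'.eval (α + γ * (p + p⁻¹)) - ω p) * ω p = P.eval (α + γ * (p + p⁻¹)) :=
  stmt15_general α γ hγ V' d u h0 hu ω hω
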